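/- Let 1 ≤ p < ∞ and 0 < ε < 1/2. Then ‖r − s^ε‖_p^p = α_p ε, where α_p = 2 ∫_0^1 (1 − 1/(1 + exp((2y−1)/(y(y−1)))))^p dy. Moreover α_p ∈ (0, 1], α_1 = 1, and consequently ‖r − s^ε‖_p^p ≤ ε. -/

import Mathlib

open MeasureTheory

/-- The indicator function of `[0,1)`. -/
noncomputable def rect (x : ℝ) : ℝ := if 0 ≤ x ∧ x < 1 then 1 else 0

/-- The basic Planck-taper window function `s^ε` with support in `[0,1]`. -/
noncomputable def planck (ε x : ℝ) : ℝ :=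
  if 0 < x ∧ x < ε then (1 + Real.exp (ε * (2 * x - ε) / (x * (x - ε))))⁻¹
  else if ε ≤ x ∧ x ≤ 1 - ε then 1
  else if 1 - ε < x ∧ x < 1 then
    (1 + Real.exp (ε * (2 * (1 - x) - ε) / ((1 - x) * ((1 - x) - ε))))⁻¹
  else 0

/-- `α_p = 2 ∫_0^1 (1 - 1/(1 + exp((2y-1)/(y(y-1)))))^p dy`. -/
noncomputable def alphaP (p : ℝ) : ℝ :=
  2 * ∫ y in (0 : ℝ)..1, (1 - (1 + Real.exp ((2 * y - 1) / (y * (y - 1))))⁻¹) ^ p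

/-- auxiliary profile function -/
noncomputable def pf (y : ℝ) : ℝ :=
  1 - (1 + Real.exp ((2 * y - 1) / (y * (y - 1))))⁻¹

lemma pf_pos (y : ℝ) : 0 < pf y := by
  have he := Real.exp_pos ((2 * y - 1) / (y * (y - 1)))
  have h1 : (1:ℝ) < 1 + Real.exp ((2 * y - 1) / (y * (y - 1))) := by linarith
  have h2 := inv_lt_one_of_one_lt₀ h1
  unfold pf; linarith

lemma pf_lt_one (y : ℝ) : pf y < 1 := by
  have he := Real.exp_pos ((2 * y - 1) / (y * (y - 1)))
  have h1 : (0:ℝ) < 1 + Real.exp ((2 * y - 1) / (y * (y - 1))) := by linarith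
  have h2 := inv_pos.mpr h1
  unfold pf; linarith

lemma measurable_pf : Measurable pf := by
  unfold pf; fun_prop

lemma pf_symm (y : ℝ) : pf (1 - y) = 1 - pf y := by
  have harg : (2 * (1 - y) - 1) / ((1 - y) * ((1 - y) - 1))
      = -((2 * y - 1) / (y * (y - 1))) := by
    rcases eq_or_ne y 0 with rfl | hy0
    · norm_num
    · rcases eq_or_ne y 1 with rfl | hy1
      · norm_num
      · rw [← neg_div, div_eq_div_iff
          (by intro h; rcases mul_eq_zero.mp h with h|h
              exacts [hy1 (by linarith), hy0 (by linarith)])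
          (by intro h; rcases mul_eq_zero.mp h with h|h
              exacts [hy0 (by linarith), hy1 (by linarith)])]
        ring
  unfold pf
  rw [harg, Real.exp_neg]
  have ha := Real.exp_pos ((2 * y - 1) / (y * (y - 1)))
  set a := Real.exp ((2 * y - 1) / (y * (y - 1)))
  have h1 : a ≠ 0 := ne_of_gt ha
  have h2 : 1 + a ≠ 0 := by positivity
  have h3 : 1 + a⁻¹ ≠ 0 := by positivity
  field_simp
  ring

lemma intervalIntegrable_of_bounded {F : ℝ → ℝ} (hm : Measurable F)
    (hb : ∀ x, |F x| ≤ 1) (a b : ℝ) : IntervalIntegrable F volume a b := by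
  rw [intervalIntegrable_iff]
  refine Integrable.mono' (g := fun _ => (1:ℝ)) ?_ hm.aestronglyMeasurable
    (ae_of_all _ fun x => by simpa [Real.norm_eq_abs] using hb x)
  exact integrableOn_const measure_Ioc_lt_top.ne

lemma pf_bound (x : ℝ) : |pf x| ≤ 1 :=
  abs_le.mpr ⟨by linarith [pf_pos x], (pf_lt_one x).le⟩

lemma int_pf : ∫ y in (0:ℝ)..1, pf y = 1/2 := by
  have hII := intervalIntegrable_of_bounded measurable_pf pf_bound 0 1
  have h1 : ∫ y in (0:ℝ)..1, pf (1 - y) = ∫ y in (0:ℝ)..1, pf y := by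
    have := intervalIntegral.integral_comp_sub_left (a := 0) (b := 1) pf 1
    simpa using this
  have h2 : ∫ y in (0:ℝ)..1, pf (1 - y) = ∫ y in (0:ℝ)..1, (1 - pf y) := by
    simp only [pf_symm]
  have h3 : ∫ y in (0:ℝ)..1, (1 - pf y)
      = (∫ y in (0:ℝ)..1, (1:ℝ)) - ∫ y in (0:ℝ)..1, pf y := by
    exact intervalIntegral.integral_sub intervalIntegrable_const hII
  have h4 : ∫ y in (0:ℝ)..1, (1:ℝ) = 1 := by simp
  linarith [h1, h2.symm.trans h1]

lemma arg_eq {ε x : ℝ} (hε : ε ≠ 0) (hx : x ≠ 0) (hxε : x - ε ≠ 0) :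
    ε * (2 * x - ε) / (x * (x - ε))
      = (2 * (x / ε) - 1) / ((x / ε) * (x / ε - 1)) := by
  have hxε' : x / ε - 1 ≠ 0 := by
    intro h
    apply hxε
    have : x / ε = 1 := by linarith
    field_simp at this
    linarith
  have hx' : x / ε ≠ 0 := div_ne_zero hx hε
  rw [div_eq_div_iff (mul_ne_zero hx hxε) (mul_ne_zero hx' hxε')]
  field_simp

/-- For `1 ≤ p < ∞` and `0 < ε < 1/2`: `‖r - s^ε‖_p^p = α_p ε`, with `α_p ∈ (0,1]`,
`α_1 = 1`, and consequently `‖r - s^ε‖_p^p ≤ ε`. -/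
theorem rect_planck_Lp (p : ℝ) (hp : 1 ≤ p) (ε : ℝ) (hε : 0 < ε) (hε' : ε < 1/2) :
    (∫ x : ℝ, |rect x - planck ε x| ^ p) = alphaP p * ε ∧
    alphaP p ∈ Set.Ioc (0 : ℝ) 1 ∧
    alphaP 1 = 1 ∧
    (∫ x : ℝ, |rect x - planck ε x| ^ p) ≤ ε := by
  have hp0 : (0:ℝ) < p := by linarith
  -- integrability and value facts about pf ^ p
  have hGm : Measurable fun y => pf y ^ p := by unfold pf; fun_prop
  have hGpos : ∀ y, 0 < pf y ^ p := fun y => Real.rpow_pos_of_pos (pf_pos y) p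
  have hGle : ∀ y, pf y ^ p ≤ pf y := by
    intro y
    have := Real.rpow_le_rpow_of_exponent_ge (pf_pos y) (pf_lt_one y).le hp
    rwa [Real.rpow_one] at this
  have hGb : ∀ y, |pf y ^ p| ≤ 1 := fun y =>
    abs_le.mpr ⟨by linarith [hGpos y], by linarith [hGle y, pf_lt_one y]⟩
  have hGII : ∀ a b : ℝ, IntervalIntegrable (fun y => pf y ^ p) volume a b :=
    intervalIntegrable_of_bounded hGm hGb
  have hpfII := intervalIntegrable_of_bounded measurable_pf pf_bound 0 1
  set I : ℝ := ∫ y in (0:ℝ)..1, pf y ^ p with hI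
  have halpha : alphaP p = 2 * I := by
    simp only [alphaP, hI, pf]
  have hIpos : 0 < I :=
    intervalIntegral.intervalIntegral_pos_of_pos_on (hGII 0 1)
      (fun x _ => hGpos x) one_pos
  have hIle : I ≤ 1/2 := by
    calc I ≤ ∫ y in (0:ℝ)..1, pf y :=
          intervalIntegral.integral_mono_on (by norm_num) (hGII 0 1) hpfII
            (fun x _ => hGle x)
      _ = 1/2 := int_pf
  have halpha1 : alphaP 1 = 1 := by
    have : alphaP 1 = 2 * ∫ y in (0:ℝ)..1, pf y := by
      simp only [alphaP, pf, Real.rpow_one]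
    rw [this, int_pf]; norm_num
  -- measurability of the integrand
  have mrect : Measurable rect := by
    unfold rect
    exact Measurable.ite (measurableSet_Ico (a := (0:ℝ)) (b := 1)) measurable_const
      measurable_const
  have mplanck : Measurable (planck ε) := by
    unfold planck
    exact Measurable.ite (measurableSet_Ioo (a := (0:ℝ)) (b := ε)) (by fun_prop)
      (Measurable.ite (measurableSet_Icc (a := ε) (b := 1-ε)) measurable_const
      (Measurable.ite (measurableSet_Ioo (a := 1-ε) (b := 1)) (by fun_prop) measurable_const))
  have mh : Measurable fun x => |rect x - planck ε x| ^ p := by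
    fun_prop
  -- global bounds
  have rect_mem : ∀ x, 0 ≤ rect x ∧ rect x ≤ 1 := by
    intro x; unfold rect; split_ifs <;> norm_num
  have inv_mem : ∀ t : ℝ, 0 < (1 + Real.exp t)⁻¹ ∧ (1 + Real.exp t)⁻¹ ≤ 1 := by
    intro t
    have := Real.exp_pos t
    constructor
    · positivity
    · exact inv_le_one_of_one_le₀ (by linarith)
  have planck_mem : ∀ x, 0 ≤ planck ε x ∧ planck ε x ≤ 1 := by
    intro x; unfold planck; split_ifs
    · exact ⟨(inv_mem _).1.le, (inv_mem _).2⟩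
    · norm_num
    · exact ⟨(inv_mem _).1.le, (inv_mem _).2⟩
    · norm_num
  have hdiff : ∀ x, |rect x - planck ε x| ≤ 1 := by
    intro x
    have h1 := rect_mem x; have h2 := planck_mem x
    exact abs_le.mpr ⟨by linarith, by linarith⟩
  have hb : ∀ x, |(|rect x - planck ε x| ^ p)| ≤ 1 := by
    intro x
    rw [abs_of_nonneg (Real.rpow_nonneg (abs_nonneg _) p)]
    exact Real.rpow_le_one (abs_nonneg _) (hdiff x) hp0.le
  -- the function vanishes off the two transition intervals (except at 0)
  set S : Set ℝ := Set.Ioo 0 ε ∪ Set.Ioo (1-ε) 1 with hS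
  have hmS : MeasurableSet S := measurableSet_Ioo.union measurableSet_Ioo
  have hae : (fun x => |rect x - planck ε x| ^ p)
      =ᵐ[volume] S.indicator (fun x => |rect x - planck ε x| ^ p) := by
    have h0 : ∀ᵐ x : ℝ, x ≠ 0 := by
      rw [ae_iff]
      simp only [ne_eq, not_not, Set.setOf_eq_eq_singleton]
      exact measure_singleton 0
    filter_upwards [h0] with x hx
    by_cases hmem : x ∈ S
    · rw [Set.indicator_of_mem hmem]
    · rw [Set.indicator_of_notMem hmem]
      simp only [hS, Set.mem_union, Set.mem_Ioo, not_or, not_and, not_lt] at hmem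
      obtain ⟨hm1, hm2⟩ := hmem
      have heq : rect x = planck ε x := by
        rcases le_or_gt x 0 with hx0 | hx0
        · have hx0' : x < 0 := lt_of_le_of_ne hx0 hx
          unfold rect planck
          rw [if_neg (by rintro ⟨a, b⟩; linarith), if_neg (by rintro ⟨a, b⟩; linarith),
            if_neg (by rintro ⟨a, b⟩; linarith), if_neg (by rintro ⟨a, b⟩; linarith)]
        · have hεx : ε ≤ x := hm1 hx0
          rcases le_or_gt x (1-ε) with hx1 | hx1
          · unfold rect planck
            rw [if_pos ⟨hx0.le, by linarith⟩, if_neg (by rintro ⟨a, b⟩; linarith),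
              if_pos ⟨hεx, hx1⟩]
          · have hx1' : 1 ≤ x := hm2 hx1
            unfold rect planck
            rw [if_neg (by rintro ⟨a, b⟩; linarith), if_neg (by rintro ⟨a, b⟩; linarith),
              if_neg (by rintro ⟨a, b⟩; linarith), if_neg (by rintro ⟨a, b⟩; linarith)]
      rw [heq, sub_self, abs_zero, Real.zero_rpow (ne_of_gt hp0)]
  have hint1 : IntegrableOn (fun x => |rect x - planck ε x| ^ p) (Set.Ioo 0 ε) := by
    refine Integrable.mono' (g := fun _ => (1:ℝ))
      (integrableOn_const measure_Ioo_lt_top.ne) mh.aestronglyMeasurable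
      (ae_of_all _ fun x => by simpa [Real.norm_eq_abs] using hb x)
  have hint2 : IntegrableOn (fun x => |rect x - planck ε x| ^ p) (Set.Ioo (1-ε) 1) := by
    refine Integrable.mono' (g := fun _ => (1:ℝ))
      (integrableOn_const measure_Ioo_lt_top.ne) mh.aestronglyMeasurable
      (ae_of_all _ fun x => by simpa [Real.norm_eq_abs] using hb x)
  have hdisj : Disjoint (Set.Ioo (0:ℝ) ε) (Set.Ioo (1-ε) 1) := by
    rw [Set.disjoint_left]
    rintro x ⟨h1, h2⟩ ⟨h3, h4⟩
    linarith
  -- first piece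
  have e1 : ∫ x in Set.Ioo 0 ε, |rect x - planck ε x| ^ p
      = ∫ x in Set.Ioo 0 ε, pf (x/ε) ^ p := by
    refine setIntegral_congr_fun measurableSet_Ioo fun x hx => ?_
    obtain ⟨hx1, hx2⟩ := hx
    have harg := arg_eq (x := x) (ne_of_gt hε) (ne_of_gt hx1) (by intro h; linarith [sub_eq_zero.mp h])
    unfold rect planck pf
    rw [if_pos ⟨hx1.le, by linarith⟩, if_pos ⟨hx1, hx2⟩, harg]
    have hm := inv_mem ((2 * (x / ε) - 1) / (x / ε * (x / ε - 1)))
    rw [abs_of_nonneg (by linarith [hm.2])]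
  have e1' : ∫ x in Set.Ioo 0 ε, pf (x/ε) ^ p = ε * I := by
    rw [← integral_Ioc_eq_integral_Ioo,
      ← intervalIntegral.integral_of_le hε.le,
      intervalIntegral.integral_comp_div (fun y => pf y ^ p) (ne_of_gt hε)]
    rw [zero_div, div_self (ne_of_gt hε), smul_eq_mul]
  -- second piece
  have e2 : ∫ x in Set.Ioo (1-ε) 1, |rect x - planck ε x| ^ p
      = ∫ x in Set.Ioo (1-ε) 1, pf ((1-x)/ε) ^ p := by
    refine setIntegral_congr_fun measurableSet_Ioo fun x hx => ?_
    obtain ⟨hx1, hx2⟩ := hx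
    have harg := arg_eq (x := 1 - x) (ne_of_gt hε) (by intro h; nlinarith) (by intro h; nlinarith)
    unfold rect planck pf
    rw [if_pos ⟨by linarith, hx2⟩, if_neg (by rintro ⟨a, b⟩; linarith),
      if_neg (by rintro ⟨a, b⟩; linarith), if_pos ⟨hx1, hx2⟩, harg]
    have hm := inv_mem ((2 * ((1-x) / ε) - 1) / ((1-x) / ε * ((1-x) / ε - 1)))
    rw [abs_of_nonneg (by linarith [hm.2])]
  have e2' : ∫ x in Set.Ioo (1-ε) 1, pf ((1-x)/ε) ^ p = ε * I := by
    rw [← integral_Ioc_eq_integral_Ioo,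
      ← intervalIntegral.integral_of_le (by linarith : 1 - ε ≤ 1)]
    have hc := intervalIntegral.integral_comp_sub_left (a := 1-ε) (b := 1)
      (fun u => pf (u/ε) ^ p) 1
    rw [hc]
    norm_num
    rw [intervalIntegral.integral_comp_div (fun y => pf y ^ p) (ne_of_gt hε),
      zero_div, div_self (ne_of_gt hε), smul_eq_mul]
  -- assemble the main integral
  have emain : (∫ x : ℝ, |rect x - planck ε x| ^ p) = alphaP p * ε := by
    rw [integral_congr_ae hae, integral_indicator hmS, hS,
      setIntegral_union hdisj measurableSet_Ioo hint1 hint2,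
      e1, e1', e2, e2', halpha]
    ring
  refine ⟨emain, ⟨by linarith [halpha], by linarith [halpha]⟩, halpha1, ?_⟩
  rw [emain]
  nlinarith [halpha]
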